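/- arXiv:2403.08735 — 2 statements merged into one kernel-verified Lean document; each statement's English description precedes it below -/
import Mathlib

section
/- Let a → e → b →^h Σa be a distinguished triangle in T with a indecomposable and b = b1 ⊕ ⋯ ⊕ bn a finite direct sum of indecomposable objects, where h = (h1, …, hn). Then there exist indecomposable objects b'1, …, b'k, a morphism h' = (h'1, …, h'k) : b' := b'1 ⊕ ⋯ ⊕ b'k → Σa whose components h'1, …, h'k are pairwise factorization free, and objects b'' and e' such that b' ⊕ b'' ≅ b and there is an isomorphism of distinguished triangles, which is the identity on a and on Σa, between the triangle a → e' ⊕ b'' → b' ⊕ b'' →^{(h',0)} Σa and the given triangle a → e → b →^h Σa. -/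
/-!
If two components of `h` satisfy `h_p = c ≫ h_q` with `p ≠ q`, then after the shear
automorphism `1 - π_p ≫ c ≫ ι_q` of `b` the `p`-th component of `h` vanishes, so `b_p` splits
off into `b''`; repeating this on the remaining summands ends with pairwise factorization free
components `h'`. The triangle over `(h', 0)` is the direct sum of a triangle over `h'` with the
contractible triangle on `b''`, and since its third morphism agrees with `h` up to the
isomorphism `b ≅ b' ⊞ b''`, it is isomorphic to the given triangle by the identity on `a`.
-/

open CategoryTheory Limits Pretriangulated

universe v u

/-- An object of an additive category is indecomposable if it is nonzero and in any
decomposition as a biproduct one of the two factors is zero. -/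
def IsIndecomposable {T : Type u} [Category.{v} T] [Preadditive T] [HasZeroObject T]
    [HasFiniteBiproducts T] [HasBinaryBiproducts T] (X : T) : Prop :=
  ¬ IsZero X ∧ ∀ (Y Z : T), Nonempty (X ≅ Y ⊞ Z) → IsZero Y ∨ IsZero Z

/-- Two morphisms `f₁ : x₁ ⟶ y` and `f₂ : x₂ ⟶ y` are factorization free if there is no
`g : x₁ ⟶ x₂` with `f₁ = f₂ ∘ g` and no `h : x₂ ⟶ x₁` with `f₂ = f₁ ∘ h`. -/
def FactorizationFree {T : Type u} [Category.{v} T] {x₁ x₂ y : T}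
    (f₁ : x₁ ⟶ y) (f₂ : x₂ ⟶ y) : Prop :=
  (¬ ∃ g : x₁ ⟶ x₂, f₁ = g ≫ f₂) ∧ (¬ ∃ h : x₂ ⟶ x₁, f₂ = h ≫ f₁)

/-- A Krull–Schmidt category: every object is a finite direct sum of objects with local
endomorphism rings. -/
def IsKrullSchmidt (T : Type u) [Category.{v} T] [Preadditive T] [HasZeroObject T]
    [HasFiniteBiproducts T] : Prop :=
  ∀ X : T, ∃ (n : ℕ) (Y : Fin n → T),
    (∀ i, IsLocalRing (End (Y i))) ∧ Nonempty (X ≅ ⨁ Y)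

namespace CategoryTheory.Limits

variable {C : Type u} [Category.{v} C] [Preadditive C] [HasFiniteBiproducts C]

section

variable [HasBinaryBiproducts C] {n : ℕ} (b : Fin (n + 1) → C) (p : Fin (n + 1))

@[simps]
noncomputable def biproductSuccAboveIso :
    (⨁ b) ≅ (⨁ fun t => b (p.succAbove t)) ⊞ b p where
  hom := biprod.lift (biproduct.lift fun t => biproduct.π b (p.succAbove t)) (biproduct.π b p)
  inv := biprod.desc (biproduct.desc fun t => biproduct.ι b (p.succAbove t)) (biproduct.ι b p)
  hom_inv_id := by
    rw [biprod.lift_desc, biproduct.lift_desc, ← biproduct.total,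
      Fin.sum_univ_succAbove (fun m => biproduct.π b m ≫ biproduct.ι b m) p]
    abel
  inv_hom_id := by
    ext t t'
    · by_cases ht : t = t'
      · subst ht; simp
      · simp [biproduct.ι_π_ne _ ht, biproduct.ι_π_ne _ (p.succAbove_right_injective.ne ht)]
    · simp [biproduct.ι_π_ne _ (p.succAbove_ne t)]
    · simp [biproduct.ι_π_ne _ (p.succAbove_ne t).symm]
    · simp

lemma biproductSuccAboveIso_inv_comp {S : C} (h : (⨁ b) ⟶ S) :
    (biproductSuccAboveIso b p).inv ≫ h = biprod.desc
      (biproduct.desc fun t => biproduct.ι b (p.succAbove t) ≫ h) (biproduct.ι b p ≫ h) := by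
  ext <;> simp

end

section

variable {n : ℕ} {b : Fin n → C} {p q : Fin n}

@[simps]
noncomputable def biproduct.shearIso (hpq : p ≠ q) (c : b p ⟶ b q) : (⨁ b) ≅ (⨁ b) where
  hom := 𝟙 _ + biproduct.π b p ≫ c ≫ biproduct.ι b q
  inv := 𝟙 _ - biproduct.π b p ≫ c ≫ biproduct.ι b q
  hom_inv_id := by simp [biproduct.ι_π_ne_assoc _ hpq.symm]
  inv_hom_id := by simp [biproduct.ι_π_ne_assoc _ hpq.symm]

lemma biproduct.ι_shearIso_inv_self (hpq : p ≠ q) (c : b p ⟶ b q) :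
    biproduct.ι b p ≫ (biproduct.shearIso hpq c).inv = biproduct.ι b p - c ≫ biproduct.ι b q := by
  simp

lemma biproduct.ι_shearIso_inv_of_ne (hpq : p ≠ q) (c : b p ⟶ b q) {t : Fin n} (ht : t ≠ p) :
    biproduct.ι b t ≫ (biproduct.shearIso hpq c).inv = biproduct.ι b t := by
  simp [biproduct.ι_π_ne_assoc _ ht]

end

lemma exists_iso_eq_comp_biprod_desc_zero [HasBinaryBiproducts C] {n : ℕ} {b : Fin (n + 1) → C}
    {S : C} (h : (⨁ b) ⟶ S) {p q : Fin (n + 1)} (hpq : p ≠ q) (c : b p ⟶ b q)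
    (hc : biproduct.ι b p ≫ h = c ≫ biproduct.ι b q ≫ h) :
    ∃ e : (⨁ b) ≅ (⨁ fun t => b (p.succAbove t)) ⊞ b p,
      h = e.hom ≫ biprod.desc (biproduct.desc fun t => biproduct.ι b (p.succAbove t) ≫ h) 0 := by
  refine ⟨biproduct.shearIso hpq c ≪≫ biproductSuccAboveIso b p, ?_⟩
  rw [← Iso.inv_comp_eq, Iso.trans_inv, Category.assoc, biproductSuccAboveIso_inv_comp,
    ← Category.assoc, biproduct.ι_shearIso_inv_self, Preadditive.sub_comp, Category.assoc, ← hc,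
    sub_self]
  congr 2
  ext t
  simp only [← Category.assoc, biproduct.ι_shearIso_inv_of_ne hpq c (p.succAbove_ne t)]

end CategoryTheory.Limits

namespace CategoryTheory.Pretriangulated

variable {C : Type u} [Category.{v} C] [Preadditive C] [HasZeroObject C] [HasShift C ℤ]
  [∀ n : ℤ, (shiftFunctor C n).Additive] [Pretriangulated C] [HasBinaryBiproducts C]

open ZeroObject in
lemma biprod_contractible_distinguished {X Y Z : C} (W : C) (f : X ⟶ Y) (g : Y ⟶ Z)
    (h : Z ⟶ X⟦(1 : ℤ)⟧) (hT : Triangle.mk f g h ∈ distTriang C) :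
    Triangle.mk (f ≫ biprod.inl) (biprod.map g (𝟙 W)) (biprod.desc h 0) ∈ distTriang C := by
  let T := Triangle.mk (f ≫ biprod.inl) (biprod.map g (𝟙 W)) (biprod.desc h 0)
  let Tp : WalkingPair → Triangle C := fun j =>
    WalkingPair.casesOn j (Triangle.mk f g h) (Triangle.mk (0 : (0 : C) ⟶ W) (𝟙 W) 0)
  let φ : T ⟶ productTriangle Tp := productTriangle.lift Tp fun j => WalkingPair.casesOn j
    (Triangle.homMk T (Triangle.mk f g h) (𝟙 X) biprod.fst biprod.fst
      (by simp [T, Triangle.mk]) (by simp [T, Triangle.mk])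
      (by simp [T, Triangle.mk]; ext <;> simp))
    (Triangle.homMk T (Triangle.mk (0 : (0 : C) ⟶ W) (𝟙 W) 0) 0 biprod.snd biprod.snd
      (by unfold T Triangle.mk; simp) (by simp [T, Triangle.mk]) (by unfold T Triangle.mk; simp))
  have : IsIso φ := by
    refine Triangle.isIso_of_isIsos _ ⟨Pi.π _ WalkingPair.left, ?_, ?_⟩
      ⟨biprod.lift (Pi.π _ WalkingPair.left) (Pi.π _ WalkingPair.right), ?_, ?_⟩
      ⟨biprod.lift (Pi.π _ WalkingPair.left) (Pi.π _ WalkingPair.right), ?_, ?_⟩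
    · exact Pi.lift_π _ _
    · apply Pi.hom_ext
      rintro (_ | _)
      · erw [Category.assoc, Pi.lift_π]
        exact (Category.comp_id _).trans (Category.id_comp _).symm
      · exact (isZero_zero C).eq_of_tgt _ _
    all_goals first
      | apply biprod.hom_ext
        · erw [Category.assoc, biprod.lift_fst, Pi.lift_π]
          exact (Category.id_comp _).symm
        · erw [Category.assoc, biprod.lift_snd, Pi.lift_π]
          exact (Category.id_comp _).symm
      | apply Pi.hom_ext
        rintro (_ | _) <;> erw [Category.assoc, Pi.lift_π]
        exacts [(biprod.lift_fst _ _).trans (Category.id_comp _).symm,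
          (biprod.lift_snd _ _).trans (Category.id_comp _).symm]
  refine isomorphic_distinguished _ (productTriangle_distinguished Tp ?_) _ (asIso φ)
  rintro (_ | _)
  exacts [hT, contractible_distinguished₁ W]

end CategoryTheory.Pretriangulated

section Decomposition

open CategoryTheory.Limits ZeroObject

variable {C : Type u} [Category.{v} C] [Preadditive C] [HasFiniteBiproducts C]
  [HasBinaryBiproducts C]

def DecomposesAs {X S : C} {k : ℕ} {b' : Fin k → C} (h : X ⟶ S) (h' : ∀ i, b' i ⟶ S) : Prop :=
  ∃ (b'' : C) (ψ : X ≅ (⨁ b') ⊞ b''), ψ.hom ≫ biprod.desc (biproduct.desc h') 0 = h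

namespace DecomposesAs

variable {X S : C} {k : ℕ} {b' : Fin k → C} {h : X ⟶ S} {h' : ∀ i, b' i ⟶ S}

lemma iso_hom_comp (hd : DecomposesAs h h') {X' : C} (e : X' ≅ X) :
    DecomposesAs (e.hom ≫ h) h' := by
  obtain ⟨b'', ψ, hψ⟩ := hd
  exact ⟨b'', e ≪≫ ψ, by rw [Iso.trans_hom, Category.assoc, hψ]⟩

lemma biprod_desc_zero (hd : DecomposesAs h h') (W : C) :
    DecomposesAs (biprod.desc h (0 : W ⟶ S)) h' := by
  obtain ⟨b'', ψ, hψ⟩ := hd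
  refine ⟨b'' ⊞ W, biprod.mapIso ψ (Iso.refl W) ≪≫ biprod.associator _ _ _, ?_⟩
  apply biprod.hom_ext' <;> simp [biprod.associator, ← hψ]
  apply biprod.hom_ext' <;> simp

end DecomposesAs

lemma decomposesAs_ι_comp [HasZeroObject C] {S : C} {n : ℕ} {b : Fin n → C} (h : (⨁ b) ⟶ S) :
    DecomposesAs h fun i => biproduct.ι b i ≫ h :=
  ⟨0, isoBiprodZero (isZero_zero C), by ext; simp⟩

theorem exists_pairwise_factorizationFree_decomposesAs [HasZeroObject C] {S : C} {n : ℕ}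
    (b : Fin n → C) (h : (⨁ b) ⟶ S) :
    ∃ (k : ℕ) (σ : Fin k → Fin n) (h' : ∀ i, b (σ i) ⟶ S),
      (∀ i j, i ≠ j → FactorizationFree (h' i) (h' j)) ∧ DecomposesAs h h' := by
  induction n with
  | zero => exact ⟨0, id, _, fun i => i.elim0, decomposesAs_ι_comp h⟩
  | succ n ih =>
    by_cases hff : ∀ i j, i ≠ j → FactorizationFree (biproduct.ι b i ≫ h) (biproduct.ι b j ≫ h)
    · exact ⟨_, id, _, hff, decomposesAs_ι_comp h⟩
    obtain ⟨p, q, hpq, c, hc⟩ : ∃ p q, p ≠ q ∧ ∃ c : b p ⟶ b q,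
        biproduct.ι b p ≫ h = c ≫ biproduct.ι b q ≫ h := by
      push Not at hff
      obtain ⟨i, j, hij, hnff⟩ := hff
      rcases not_and_or.mp hnff with hc | hc <;> obtain ⟨c, hc⟩ := not_not.mp hc
      exacts [⟨i, j, hij, c, hc⟩, ⟨j, i, hij.symm, c, hc⟩]
    obtain ⟨e, he⟩ := exists_iso_eq_comp_biprod_desc_zero h hpq c hc
    obtain ⟨k, σ, h', hff', hd⟩ := ih (fun t => b (p.succAbove t))
      (biproduct.desc fun t => biproduct.ι b (p.succAbove t) ≫ h)
    exact ⟨k, fun i => p.succAbove (σ i), h', hff', he ▸ (hd.biprod_desc_zero _).iso_hom_comp e⟩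

end Decomposition

theorem triangle_decomposition
    {K : Type*} [Field K] {T : Type u} [Category.{v} T] [Preadditive T] [Linear K T]
    [HasZeroObject T] [HasFiniteBiproducts T] [HasBinaryBiproducts T] [HasShift T ℤ]
    [∀ n : ℤ, (shiftFunctor T n).Additive] [Pretriangulated T]
    [∀ X Y : T, FiniteDimensional K (X ⟶ Y)]
    (hKS : IsKrullSchmidt T)
    (hdim : ∀ X Y : T, Module.finrank K (X ⟶ Y) ≤ 1)
    (a e : T) {n : ℕ} (b : Fin n → T)
    (ha : IsIndecomposable a) (hb : ∀ i, IsIndecomposable (b i))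
    (f : a ⟶ e) (g : e ⟶ ⨁ b) (h : (⨁ b) ⟶ a⟦(1:ℤ)⟧)
    (hT : Triangle.mk f g h ∈ distTriang T) :
    ∃ (k : ℕ) (b' : Fin k → T) (_ : ∀ i, IsIndecomposable (b' i))
      (h' : ∀ i, b' i ⟶ a⟦(1:ℤ)⟧)
      (_ : ∀ i j, i ≠ j → FactorizationFree (h' i) (h' j))
      (b'' e' : T) (f' : a ⟶ e' ⊞ b'') (g' : e' ⊞ b'' ⟶ (⨁ b') ⊞ b'')
      (_ : Triangle.mk f' g' (biprod.desc (biproduct.desc h') 0) ∈ distTriang T)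
      (φ : Triangle.mk f' g' (biprod.desc (biproduct.desc h') 0) ≅ Triangle.mk f g h),
      φ.hom.hom₁ = 𝟙 a := by
  obtain ⟨k, σ, h', hff, b'', ψ, hψ⟩ := exists_pairwise_factorizationFree_decomposesAs b h
  obtain ⟨e', f₀, g₀, hT₀⟩ := distinguished_cocone_triangle₂ (biproduct.desc h')
  have hT' := biprod_contractible_distinguished b'' f₀ g₀ _ hT₀
  refine ⟨k, fun i => b (σ i), fun i => hb (σ i), h', hff, b'', e', _, _, hT',
    isoTriangleOfIso₁₃ _ _ hT' hT (Iso.refl a) ψ.symm ?_, isoTriangleOfIso₁₃_hom_hom₁ ..⟩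
  erw [CategoryTheory.Functor.map_id, Category.comp_id]
  exact (Iso.eq_inv_comp ψ).mpr hψ
end

section
/- Let (Q, Y) be an alternating non-crossing partition of [m'] ∪ [m]. Then the set of arcs V_{(Q,Y)} ∩ A satisfies the PC conditions if and only if for every p ∈ [m] with y_p = p⁺, the labels p⁻ and p⁺ lie in a common block of Q. -/
namespace PY

/-! ### The ∞-gon `Z_{2m}`

Labels are elements of `Fin (2 * m)`, ordered `1' < 1 < 2' < 2 < ⋯ < m' < m`:
the label `2 * i` is the primed (accumulation-point) label `(i+1)'` and the label
`2 * i + 1` is the unprimed label `i + 1`.  A point of `Z_{2m}` is a pair of a label and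
an integer. -/

/-- Points of the ∞-gon `Z_{2m}`: a label and an integer. -/
abbrev Pt (m : ℕ) := Fin (2 * m) × ℤ

/-- Cyclic successor of a label. -/
def cycSucc {n : ℕ} (r : Fin n) : Fin n := ⟨(r.1 + 1) % n, Nat.mod_lt _ r.pos⟩

/-- Cyclic predecessor of a label. -/
def cycPred {n : ℕ} (r : Fin n) : Fin n := ⟨(r.1 + (n - 1)) % n, Nat.mod_lt _ r.pos⟩

/-- Strict lexicographic order on the points of `Z_{2m}`. -/
def ptLt {m : ℕ} (a b : Pt m) : Prop := a.1 < b.1 ∨ (a.1 = b.1 ∧ a.2 < b.2)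

/-- `sort2 a b` is the pair `(a, b)` arranged in (weakly) increasing lexicographic
order; it realizes the notation `|a, b|` for the arc connecting two points. -/
def sort2 {m : ℕ} (a b : Pt m) : Pt m × Pt m :=
  if a.1 < b.1 ∨ (a.1 = b.1 ∧ a.2 ≤ b.2) then (a, b) else (b, a)

/-- An ordered pair of points of `Z_{2m}` is an arc when its endpoints are in increasing
lexicographic order and, if they lie in the same copy of `ℤ`, differ by at least `2`. -/
def IsArc {m : ℕ} (x : Pt m × Pt m) : Prop :=
  ptLt x.1 x.2 ∧ (x.1.1 = x.2.1 → x.1.2 + 2 ≤ x.2.2)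

/-- The precovering conditions (PC conditions) for a set of arcs of `Z_{2m}`. -/
structure PCcond {m : ℕ} (U : Set (Pt m × Pt m)) : Prop where
  pc1 : ∀ p q : Fin (2 * m), p ≠ q → ∀ x1 x2 : ℕ → ℤ, StrictMono x1 → StrictMono x2 →
    (∀ n, ((p, x1 n), (q, x2 n)) ∈ U) →
    ∃ y1 y2 : ℕ → ℤ, StrictAnti y1 ∧ StrictAnti y2 ∧
      ∀ n, sort2 (cycSucc p, y1 n) (cycSucc q, y2 n) ∈ U
  pc2 : ∀ p q : Fin (2 * m), p ≠ cycSucc q → ∀ x1 x2 : ℕ → ℤ,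
    StrictAnti x1 → StrictMono x2 →
    (∀ n, ((p, x1 n), (q, x2 n)) ∈ U) →
    ∃ y1 y2 : ℕ → ℤ, StrictAnti y1 ∧ StrictAnti y2 ∧
      ∀ n, sort2 (p, y1 n) (cycSucc q, y2 n) ∈ U
  pc2' : ∀ p q : Fin (2 * m), q ≠ cycSucc p → p ≠ q → ∀ x1 x2 : ℕ → ℤ,
    StrictMono x1 → StrictAnti x2 →
    (∀ n, ((p, x1 n), (q, x2 n)) ∈ U) →
    ∃ y1 y2 : ℕ → ℤ, StrictAnti y1 ∧ StrictAnti y2 ∧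
      ∀ n, sort2 (cycSucc p, y1 n) (q, y2 n) ∈ U
  pc3 : ∀ p q : Fin (2 * m), ∀ (x1 : ℤ) (x2 : ℕ → ℤ), StrictMono x2 →
    (∀ n, ((p, x1), (q, x2 n)) ∈ U) →
    ∃ y2 : ℕ → ℤ, StrictAnti y2 ∧ ∀ n, sort2 (p, x1) (cycSucc q, y2 n) ∈ U
  pc3' : ∀ p q : Fin (2 * m), p ≠ q → ∀ (x1 : ℕ → ℤ) (x2 : ℤ), StrictMono x1 →
    (∀ n, ((p, x1 n), (q, x2)) ∈ U) →
    ∃ y1 : ℕ → ℤ, StrictAnti y1 ∧ ∀ n, sort2 (cycSucc p, y1 n) (q, x2) ∈ U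

/-- A point is admissible for the subcategory `A`: its label is unprimed, or it is a
point `(q, n)` of a primed copy with `n ≤ z0`. -/
def memA {m : ℕ} (z0 : ℤ) (a : Pt m) : Prop :=
  a.1.1 % 2 = 1 ∨ (a.1.1 % 2 = 0 ∧ a.2 ≤ z0)

/-- The set of arcs `A` determined by the choice of `z0`. -/
def setA (m : ℕ) (z0 : ℤ) : Set (Pt m × Pt m) :=
  {x | memA z0 x.1 ∧ memA z0 x.2}

/-! ### Decorations

The linearly ordered set `{p} ∪ Z^(p) ∪ {p⁺}` is modelled as `WithBot (WithTop ℤ)`: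
`⊥` is the accumulation point `p`, an integer `n` is the point `n` of `Z^(p)`, and the
top element is the accumulation point `p⁺`. -/

/-- The linearly ordered set `{p} ∪ Z^(p) ∪ {p⁺}`. -/
abbrev Dm := WithBot (WithTop ℤ)

/-- An integer, viewed in `{p} ∪ Z^(p) ∪ {p⁺}`. -/
def toDm (n : ℤ) : Dm := ((n : WithTop ℤ) : Dm)

/-- The element `p⁺` of `{p} ∪ Z^(p) ∪ {p⁺}`. -/
def topDm : Dm := ((⊤ : WithTop ℤ) : Dm)

/-- The unprimed label `p ∈ [m]` with index `i`. -/
def unpr {m : ℕ} (i : Fin m) : Fin (2 * m) := ⟨2 * i.1 + 1, by have := i.2; omega⟩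

/-- The primed label `p' ∈ [m']` with index `i`. -/
def prim {m : ℕ} (i : Fin m) : Fin (2 * m) := ⟨2 * i.1, by have := i.2; omega⟩

/-- Four points of `Fin n` (viewed on a circle with its natural cyclic order) are in
(strict, anticlockwise) cyclic order. -/
def Cyc4 {n : ℕ} (a b c d : Fin n) : Prop :=
  (a < b ∧ b < c ∧ c < d) ∨ (b < c ∧ c < d ∧ d < a) ∨
  (c < d ∧ d < a ∧ a < b) ∨ (d < a ∧ a < b ∧ b < c)

/-- A partition (setoid) of `Fin n` is non-crossing if there are no elements
`i1, j1, i2, j2` in cyclic order with `i1, i2` in one block and `j1, j2` in a different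
block. -/
def IsNoncrossing {n : ℕ} (P : Setoid (Fin n)) : Prop :=
  ∀ i1 j1 i2 j2 : Fin n, Cyc4 i1 j1 i2 j2 → P.r i1 i2 → P.r j1 j2 → P.r i1 j1

/-! ### Alternating non-crossing partitions and the arc sets `U_{(P,X)}` -/

/-- A point of `Z_{2m}` belongs to the interval `[x_{p⁻}, p⁺)` attached to the primed
label `p' ∈ [m']` of index `j`: it lies in the primed copy `Z^(p)`, or in the unprimed
copy `Z^(p⁻)` above the decoration `x_{p⁻}`. -/
def altRegion {m : ℕ} (x : Fin m → Dm) (j : Fin m) (a : Pt m) : Prop :=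
  a.1 = prim j ∨ (a.1 = unpr (cycPred j) ∧ x (cycPred j) ≤ toDm a.2)

/-- The set of arcs `U_{(P,X)}` associated with an alternating non-crossing partition
`(P, X)`: arcs both of whose endpoints lie in `⋃_{p ∈ B} [x_{p⁻}, p⁺)` for a single
block `B` of `P`. -/
def altU {m : ℕ} (P : Setoid (Fin m)) (x : Fin m → Dm) : Set (Pt m × Pt m) :=
  {a | IsArc a ∧ ∃ b : Fin m,
    (∃ j, P.r b j ∧ altRegion x j a.1) ∧ (∃ j, P.r b j ∧ altRegion x j a.2)}

end PY

namespace PY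

/-- A point of `Z_{2m}` belongs to the interval `(p, y_{p⁺}]` attached to the primed
label `p ∈ [m']` of index `j`: it lies in the primed copy `Z^(p)`, or in the unprimed
copy `Z^(p⁺)` below the decoration `y_{p⁺}`. -/
def vRegion {m : ℕ} (y : Fin m → Dm) (j : Fin m) (a : Pt m) : Prop :=
  a.1 = prim j ∨ (a.1 = unpr j ∧ toDm a.2 ≤ y j)

/-- The set of arcs `V_{(Q,Y)}` associated with an alternating non-crossing partition
`(Q, Y)`: arcs both of whose endpoints lie in `⋃_{p ∈ B} (p, y_{p⁺}]` for a single
block `B` of `Q`. -/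
def altV {m : ℕ} (Q : Setoid (Fin m)) (y : Fin m → Dm) : Set (Pt m × Pt m) :=
  {a | IsArc a ∧ ∃ b : Fin m,
    (∃ j, Q.r b j ∧ vRegion y j a.1) ∧ (∃ j, Q.r b j ∧ vRegion y j a.2)}

end PY

namespace PY

variable {m : ℕ}

/-- The index in `Fin m` of a label of `Fin (2*m)`. -/
def idx (r : Fin (2 * m)) : Fin m := ⟨r.1 / 2, by have := r.2; omega⟩

/-- The coordinate condition at a single endpoint. -/
def Cc (z0 : ℤ) (y : Fin m → Dm) (r : Fin (2 * m)) (x : ℤ) : Prop :=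
  (r.1 % 2 = 0 → x ≤ z0) ∧ (r.1 % 2 = 1 → toDm x ≤ y (idx r))

lemma toDm_le_toDm {a b : ℤ} (h : a ≤ b) : toDm a ≤ toDm b :=
  WithBot.coe_le_coe.mpr (WithTop.coe_le_coe.mpr h)

lemma toDm_le_top (a : ℤ) : toDm a ≤ topDm :=
  WithBot.coe_le_coe.mpr le_top

lemma Cc_anti {z0 : ℤ} {y : Fin m → Dm} {r : Fin (2 * m)} {x a : ℤ}
    (h : Cc z0 y r x) (hax : a ≤ x) : Cc z0 y r a :=
  ⟨fun he => le_trans hax (h.1 he), fun ho => le_trans (toDm_le_toDm hax) (h.2 ho)⟩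

lemma Cc_even {z0 : ℤ} {y : Fin m → Dm} {r : Fin (2 * m)} (h : r.1 % 2 = 0) {a : ℤ}
    (ha : a ≤ z0) : Cc z0 y r a :=
  ⟨fun _ => ha, fun ho => absurd ho (by omega)⟩

lemma endpoint_mp {z0 : ℤ} {y : Fin m → Dm} {j : Fin m} {p : Fin (2 * m)} {x : ℤ}
    (hr : vRegion y j (p, x)) (hA : memA z0 (p, x)) : j = idx p ∧ Cc z0 y p x := by
  rcases hr with h | ⟨h, hle⟩
  · have hv : p.1 = 2 * j.1 := congrArg Fin.val h
    have hj : j = idx p := by apply Fin.ext; show j.1 = p.1 / 2; omega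
    refine ⟨hj, fun _ => ?_, fun ho => absurd ho (by omega)⟩
    rcases hA with ho | ⟨_, hz⟩
    · exact absurd (show p.1 % 2 = 1 from ho) (by omega)
    · exact hz
  · have hv : p.1 = 2 * j.1 + 1 := congrArg Fin.val h
    have hj : j = idx p := by apply Fin.ext; show j.1 = p.1 / 2; omega
    exact ⟨hj, fun he => absurd he (by omega), fun _ => hj ▸ hle⟩

lemma endpoint_mpr {z0 : ℤ} {y : Fin m → Dm} {p : Fin (2 * m)} {x : ℤ}
    (hC : Cc z0 y p x) : vRegion y (idx p) (p, x) ∧ memA z0 (p, x) := by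
  rcases Nat.mod_two_eq_zero_or_one p.1 with h | h
  · refine ⟨Or.inl ?_, Or.inr ⟨h, hC.1 h⟩⟩
    apply Fin.ext; show p.1 = 2 * (p.1 / 2); omega
  · refine ⟨Or.inr ⟨?_, hC.2 h⟩, Or.inl h⟩
    apply Fin.ext; show p.1 = 2 * (p.1 / 2) + 1; omega

lemma mem_iff {z0 : ℤ} {Q : Setoid (Fin m)} {y : Fin m → Dm} {p q : Fin (2 * m)}
    {x z : ℤ} :
    ((p, x), (q, z)) ∈ altV Q y ∩ setA m z0 ↔
      IsArc ((p, x), (q, z)) ∧ Q.r (idx p) (idx q) ∧ Cc z0 y p x ∧ Cc z0 y q z := by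
  constructor
  · rintro ⟨⟨harc, b, ⟨j1, hb1, hr1⟩, ⟨j2, hb2, hr2⟩⟩, hA1, hA2⟩
    obtain ⟨hj1, hC1⟩ := endpoint_mp hr1 hA1
    obtain ⟨hj2, hC2⟩ := endpoint_mp hr2 hA2
    exact ⟨harc, Q.iseqv.trans (Q.iseqv.symm (hj1 ▸ hb1)) (hj2 ▸ hb2), hC1, hC2⟩
  · rintro ⟨harc, hQr, hC1, hC2⟩
    obtain ⟨hr1, hA1⟩ := endpoint_mpr hC1
    obtain ⟨hr2, hA2⟩ := endpoint_mpr hC2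
    exact ⟨⟨harc, idx p, ⟨idx p, Q.iseqv.refl _, hr1⟩, ⟨idx q, hQr, hr2⟩⟩, hA1, hA2⟩

lemma mem_sort2 {z0 : ℤ} {Q : Setoid (Fin m)} {y : Fin m → Dm} {p q : Fin (2 * m)}
    {x z : ℤ} (hC1 : Cc z0 y p x) (hC2 : Cc z0 y q z) (hr : Q.r (idx p) (idx q))
    (hgap : p = q → x + 2 ≤ z ∨ z + 2 ≤ x) :
    sort2 (p, x) (q, z) ∈ altV Q y ∩ setA m z0 := by
  unfold sort2
  split
  case isTrue h =>
    refine mem_iff.mpr ⟨⟨?_, ?_⟩, hr, hC1, hC2⟩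
    · rcases h with hlt | ⟨heq, hle⟩
      · exact Or.inl hlt
      · have hle' : x ≤ z := hle
        rcases hgap heq with hg | hg
        · exact Or.inr ⟨heq, show x < z by omega⟩
        · exact Or.inr ⟨heq, show x < z by omega⟩
    · intro he
      rcases h with hlt | ⟨heq, hle⟩
      · exact absurd (show p = q from he) (ne_of_lt hlt)
      · have hle' : x ≤ z := hle
        rcases hgap heq with hg | hg
        · exact hg
        · show x + 2 ≤ z; omega
  case isFalse h =>
    rcases lt_trichotomy p q with h1 | h1 | h1
    · exact absurd (Or.inl h1) h
    · have hz : z < x := by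
        by_contra hc
        exact h (Or.inr ⟨h1, show x ≤ z by omega⟩)
      have hg : z + 2 ≤ x := by
        rcases hgap h1 with hg | hg
        · omega
        · exact hg
      exact mem_iff.mpr ⟨⟨Or.inr ⟨h1.symm, hz⟩, fun _ => hg⟩,
        Q.iseqv.symm hr, hC2, hC1⟩
    · exact mem_iff.mpr ⟨⟨Or.inl h1, fun he => absurd (show q = p from he) (ne_of_lt h1)⟩,
        Q.iseqv.symm hr, hC2, hC1⟩

lemma strictMono_ge {x : ℕ → ℤ} (hx : StrictMono x) : ∀ n : ℕ, x 0 + n ≤ x n := by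
  intro n
  induction n with
  | zero => simp
  | succ k ih =>
    have h : x k < x (k + 1) := hx (by omega)
    push_cast
    push_cast at ih
    omega

lemma Cc_unbounded {z0 : ℤ} {y : Fin m → Dm} {r : Fin (2 * m)} {x : ℕ → ℤ}
    (hx : StrictMono x) (h : ∀ n, Cc z0 y r (x n)) :
    r.1 % 2 = 1 ∧ y (idx r) = topDm := by
  have key := strictMono_ge hx
  have hub : ∀ k : ℤ, ∃ n : ℕ, k < x n := by
    intro k
    refine ⟨(k - x 0 + 1).toNat, ?_⟩
    have h1 := Int.self_le_toNat (k - x 0 + 1)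
    have h2 := key (k - x 0 + 1).toNat
    omega
  have hodd : r.1 % 2 = 1 := by
    rcases Nat.mod_two_eq_zero_or_one r.1 with he | ho
    · obtain ⟨n, hn⟩ := hub z0
      have := (h n).1 he
      omega
    · exact ho
  refine ⟨hodd, ?_⟩
  rcases hy : y (idx r) with _ | (_ | k)
  · have h0 := (h 0).2 hodd
    rw [hy] at h0
    exact absurd h0 (WithBot.not_coe_le_bot _)
  · rfl
  · obtain ⟨n, hn⟩ := hub k
    have h0 := (h n).2 hodd
    rw [hy] at h0
    have : x n ≤ k := by
      have := WithTop.coe_le_coe.mp (WithBot.coe_le_coe.mp h0)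
      exact this
    omega

lemma cycSucc_parity {r : Fin (2 * m)} (h : r.1 % 2 = 1) : (cycSucc r).1 % 2 = 0 := by
  show (r.1 + 1) % (2 * m) % 2 = 0
  have h2 := r.2
  by_cases hlt : r.1 + 1 < 2 * m
  · rw [Nat.mod_eq_of_lt hlt]; omega
  · have he : r.1 + 1 = 2 * m := by omega
    rw [he, Nat.mod_self]

lemma idx_cycSucc {r : Fin (2 * m)} (h : r.1 % 2 = 1) :
    idx (cycSucc r) = cycSucc (idx r) := by
  have h2 := r.2
  apply Fin.ext
  show (r.1 + 1) % (2 * m) / 2 = (r.1 / 2 + 1) % m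
  by_cases hlt : r.1 + 1 < 2 * m
  · rw [Nat.mod_eq_of_lt hlt]
    have hmlt : r.1 / 2 + 1 < m := by omega
    rw [Nat.mod_eq_of_lt hmlt]
    omega
  · have he : r.1 + 1 = 2 * m := by omega
    rw [he, Nat.mod_self]
    have hm2 : r.1 / 2 + 1 = m := by omega
    rw [hm2, Nat.mod_self]

lemma cycSucc_inj {n : ℕ} {a b : Fin n} (h : cycSucc a = cycSucc b) : a = b := by
  have ha := a.2
  have hb := b.2
  have hv : (a.1 + 1) % n = (b.1 + 1) % n := congrArg Fin.val h
  apply Fin.ext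
  by_cases h1 : a.1 + 1 < n <;> by_cases h2 : b.1 + 1 < n
  · rw [Nat.mod_eq_of_lt h1, Nat.mod_eq_of_lt h2] at hv; omega
  · have hbe : b.1 + 1 = n := by omega
    rw [Nat.mod_eq_of_lt h1, hbe, Nat.mod_self] at hv; omega
  · have hae : a.1 + 1 = n := by omega
    rw [hae, Nat.mod_self, Nat.mod_eq_of_lt h2] at hv; omega
  · omega

lemma strictAnti_sub (c : ℤ) : StrictAnti (fun n : ℕ => c - (n : ℤ)) := by
  intro a b hab
  simp only
  omega

end PY

/-!
STATEMENT 19: Let (Q, Y) be an alternating non-crossing partition of [m'] ∪ [m]. Then the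
set of arcs V_{(Q,Y)} ∩ A satisfies the PC conditions if and only if for every p ∈ [m]
with y_p = p⁺, the labels p⁻ and p⁺ lie in a common block of Q.
-/

open PY in
theorem altV_inter_A_satisfies_PC_iff
    (m : ℕ) (hm : 0 < m) (z0 : ℤ)
    (Q : Setoid (Fin m)) (y : Fin m → Dm) (hQ : IsNoncrossing Q) :
    PCcond (altV Q y ∩ setA m z0) ↔
      ∀ i : Fin m, y i = topDm → Q.r i (cycSucc i) := by
  constructor
  · intro hPC i hyi
    have hui : (unpr (m := m) i).1 % 2 = 1 := by show (2 * i.1 + 1) % 2 = 1; omega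
    have hidx : idx (unpr (m := m) i) = i := by
      apply Fin.ext; show (2 * i.1 + 1) / 2 = i.1; omega
    have hCu : ∀ a : ℤ, Cc z0 y (unpr i) a := fun a =>
      ⟨fun he => by omega, fun _ => by rw [hidx, hyi]; exact toDm_le_top a⟩
    obtain ⟨y2, _, hmem⟩ := hPC.pc3 (unpr i) (unpr i) 0 (fun n => (n : ℤ) + 2)
      (fun a b hab => by simp only; omega)
      (fun n => mem_iff.mpr ⟨⟨Or.inr ⟨rfl, show (0 : ℤ) < (n : ℤ) + 2 by omega⟩,
        fun _ => show (0 : ℤ) + 2 ≤ (n : ℤ) + 2 by omega⟩,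
        Q.iseqv.refl _, hCu 0, hCu _⟩)
    have h0 := hmem 0
    unfold sort2 at h0
    split at h0
    · have hr := (mem_iff.mp h0).2.1
      rw [hidx, idx_cycSucc hui, hidx] at hr
      exact hr
    · have hr := (mem_iff.mp h0).2.1
      rw [hidx, idx_cycSucc hui, hidx] at hr
      exact Q.iseqv.symm hr
  · intro hY
    constructor
    · -- pc1
      intro p q hpq x1 x2 h1 h2 hU
      have hm1 := fun n => mem_iff.mp (hU n)
      have hC1 : ∀ n, Cc z0 y p (x1 n) := fun n => (hm1 n).2.2.1
      have hC2 : ∀ n, Cc z0 y q (x2 n) := fun n => (hm1 n).2.2.2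
      have hQr : Q.r (idx p) (idx q) := (hm1 0).2.1
      obtain ⟨hp1, hp2⟩ := Cc_unbounded h1 hC1
      obtain ⟨hq1, hq2⟩ := Cc_unbounded h2 hC2
      refine ⟨fun n => z0 - n, fun n => z0 - n, strictAnti_sub z0, strictAnti_sub z0,
        fun n => ?_⟩
      refine mem_sort2 (Cc_even (cycSucc_parity hp1) (show z0 - (n : ℤ) ≤ z0 by omega))
        (Cc_even (cycSucc_parity hq1) (show z0 - (n : ℤ) ≤ z0 by omega)) ?_
        (fun h => absurd (cycSucc_inj h) hpq)
      rw [idx_cycSucc hp1, idx_cycSucc hq1]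
      exact Q.iseqv.trans (Q.iseqv.symm (hY _ hp2)) (Q.iseqv.trans hQr (hY _ hq2))
    · -- pc2
      intro p q hpq x1 x2 h1 h2 hU
      have hm1 := fun n => mem_iff.mp (hU n)
      have hC1 : Cc z0 y p (x1 0) := (hm1 0).2.2.1
      have hC2 : ∀ n, Cc z0 y q (x2 n) := fun n => (hm1 n).2.2.2
      have hQr : Q.r (idx p) (idx q) := (hm1 0).2.1
      obtain ⟨hq1, hq2⟩ := Cc_unbounded h2 hC2
      refine ⟨fun n => x1 0 - n, fun n => z0 - n, strictAnti_sub _, strictAnti_sub _,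
        fun n => ?_⟩
      refine mem_sort2 (Cc_anti hC1 (show x1 0 - (n : ℤ) ≤ x1 0 by omega))
        (Cc_even (cycSucc_parity hq1) (show z0 - (n : ℤ) ≤ z0 by omega)) ?_
        (fun h => absurd h hpq)
      rw [idx_cycSucc hq1]
      exact Q.iseqv.trans hQr (hY _ hq2)
    · -- pc2'
      intro p q hqp hpq x1 x2 h1 h2 hU
      have hm1 := fun n => mem_iff.mp (hU n)
      have hC1 : ∀ n, Cc z0 y p (x1 n) := fun n => (hm1 n).2.2.1
      have hC2 : Cc z0 y q (x2 0) := (hm1 0).2.2.2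
      have hQr : Q.r (idx p) (idx q) := (hm1 0).2.1
      obtain ⟨hp1, hp2⟩ := Cc_unbounded h1 hC1
      refine ⟨fun n => z0 - n, fun n => x2 0 - n, strictAnti_sub _, strictAnti_sub _,
        fun n => ?_⟩
      refine mem_sort2 (Cc_even (cycSucc_parity hp1) (show z0 - (n : ℤ) ≤ z0 by omega))
        (Cc_anti hC2 (show x2 0 - (n : ℤ) ≤ x2 0 by omega)) ?_
        (fun h => absurd h.symm hqp)
      rw [idx_cycSucc hp1]
      exact Q.iseqv.trans (Q.iseqv.symm (hY _ hp2)) hQr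
    · -- pc3
      intro p q x1 x2 h2 hU
      have hm1 := fun n => mem_iff.mp (hU n)
      have hC1 : Cc z0 y p x1 := (hm1 0).2.2.1
      have hC2 : ∀ n, Cc z0 y q (x2 n) := fun n => (hm1 n).2.2.2
      have hQr : Q.r (idx p) (idx q) := (hm1 0).2.1
      obtain ⟨hq1, hq2⟩ := Cc_unbounded h2 hC2
      refine ⟨fun n => min z0 (x1 - 2) - n, strictAnti_sub _, fun n => ?_⟩
      refine mem_sort2 hC1
        (Cc_even (cycSucc_parity hq1) (show min z0 (x1 - 2) - (n : ℤ) ≤ z0 by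
          have := min_le_left z0 (x1 - 2); omega)) ?_
        (fun _ => Or.inr (show min z0 (x1 - 2) - (n : ℤ) + 2 ≤ x1 by
          have := min_le_right z0 (x1 - 2); omega))
      rw [idx_cycSucc hq1]
      exact Q.iseqv.trans hQr (hY _ hq2)
    · -- pc3'
      intro p q hpq x1 x2 h1 hU
      have hm1 := fun n => mem_iff.mp (hU n)
      have hC1 : ∀ n, Cc z0 y p (x1 n) := fun n => (hm1 n).2.2.1
      have hC2 : Cc z0 y q x2 := (hm1 0).2.2.2
      have hQr : Q.r (idx p) (idx q) := (hm1 0).2.1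
      obtain ⟨hp1, hp2⟩ := Cc_unbounded h1 hC1
      refine ⟨fun n => min z0 (x2 - 2) - n, strictAnti_sub _, fun n => ?_⟩
      refine mem_sort2
        (Cc_even (cycSucc_parity hp1) (show min z0 (x2 - 2) - (n : ℤ) ≤ z0 by
          have := min_le_left z0 (x2 - 2); omega))
        hC2 ?_ (fun _ => Or.inl (show min z0 (x2 - 2) - (n : ℤ) + 2 ≤ x2 by
          have := min_le_right z0 (x2 - 2); omega))
      rw [idx_cycSucc hp1]
      exact Q.iseqv.trans (Q.iseqv.symm (hY _ hp2)) hQr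
end
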